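/- Let G and H be n-vertex graphs such that the 2k-dimensional Weisfeiler-Lehman algorithm does not distinguish G from H. Then the k-th symmetric powers G^{k} and H^{k} are cospectral. -/

import Mathlib

attribute [local instance] Classical.propDecidable

/-- The type of "types" (isomorphism types) of k-tuples: the pattern of equalities
and of adjacencies among the entries. -/
def Tp (k : ℕ) : Type := (Fin k → Fin k → Prop) × (Fin k → Fin k → Prop)

/-- The type `tp` of a k-tuple of vertices: which entries are equal and which are
adjacent. Two tuples are equivalent iff they have the same `tp`. -/
def tp {V : Type*} (G : SimpleGraph V) {k : ℕ} (x : Fin k → V) : Tp k :=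
  (fun a b => x a = x b, fun a b => G.Adj (x a) (x b))

/-- The type of colors used at round `r+1` of the k-dimensional Weisfeiler-Lehman
refinement (round indexing starts at `0` here, corresponding to round `1` of the
usual presentation). -/
def WLColor (k : ℕ) : ℕ → Type
  | 0 => Tp k
  | r + 1 => Multiset (Tp (k + 1) × (Fin k → WLColor k r))

/-- The k-dimensional Weisfeiler-Lehman coloring of k-tuples: round `0` is the type
`tp`, and round `r+1` attaches to a tuple the multiset, over all vertices `m`, of the
type of the extended `(k+1)`-tuple together with the round-`r` colors of the tuples
obtained by substituting `m` into each of the `k` positions. -/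
def WL {V : Type*} [Fintype V] (G : SimpleGraph V) (k : ℕ) :
    (r : ℕ) → (Fin k → V) → WLColor k r
  | 0, x => tp G x
  | r + 1, x =>
      Finset.univ.val.map fun m : V =>
        (tp G (Fin.snoc x m), fun t => WL G k r (Function.update x t m))

/-- The k-th symmetric power of a graph: vertices are the k-element subsets of the
vertex set; two k-subsets are adjacent iff their symmetric difference is an edge. -/
def symPow {V : Type*} [DecidableEq V] (G : SimpleGraph V) (k : ℕ) :
    SimpleGraph {s : Finset V // s.card = k} where
  Adj s t := ∃ a b : V, G.Adj a b ∧ symmDiff s.1 t.1 = {a, b}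
  symm := by
    constructor
    rintro s t ⟨a, b, hab, h⟩
    exact ⟨a, b, hab, by rw [symmDiff_comm]; exact h⟩
  loopless := by
    constructor
    rintro s ⟨a, b, hab, h⟩
    rw [symmDiff_self] at h
    have : a ∈ (⊥ : Finset V) := h ▸ Finset.mem_insert_self a {b}
    simp at this

/-!
A real symmetric matrix has real eigenvalues, so its characteristic polynomial is determined by its
size together with the traces of its powers (Newton's identities for the eigenvalues). It is
therefore enough to show that 2k-WL determines `tr (A ^ (r + 1))` for the adjacency matrix `A` of
`G^{k}`.

Read a `2k`-tuple as a pair `(u, v)` of `k`-tuples. When `u` is injective, a step of a walk in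
`G^{k}` out of the set of `u` replaces an entry `u t` by a vertex `m` outside `u` adjacent to it:
this is the substitution `x[t := m]` that a WL round ranges over, subject to a condition on the
type of `(x, m)`. By induction on `r`, the number of walks of length `r` from the set of `u` to the
set of `v` is thus a function `walkCount` of the round-`r` colour of `(u, v)`. Summing over all
pairs of injective tuples with the same underlying set counts every closed walk `k! * k!` times.
-/

open Finset
open scoped Nat

namespace MvPolynomial

theorem aeval_esymm_eq_of_sum_pow_eq {σ K : Type*} [Fintype σ] [Field K] [CharZero K]
    {d e : σ → K} (h : ∀ j, 0 < j → ∑ i, d i ^ j = ∑ i, e i ^ j) (j : ℕ) :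
    aeval d (esymm σ K j) = aeval e (esymm σ K j) := by
  induction j using Nat.strong_induction_on with
  | _ j ih =>
    rcases Nat.eq_zero_or_pos j with rfl | hj
    · simp
    have hpsum : ∀ l, 0 < l → aeval d (psum σ K l) = aeval e (psum σ K l) := fun l hl => by
      simpa [psum] using h l hl
    have newton := fun f : σ → K => congrArg (aeval f) (mul_esymm_eq_sum σ K j)
    simp only [map_mul, map_natCast, map_pow, map_sum, map_neg, map_one] at newton
    refine mul_left_cancel₀ (Nat.cast_ne_zero.mpr hj.ne' : (j : K) ≠ 0) ?_
    rw [newton d, newton e]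
    refine congrArg _ (sum_congr rfl fun a ha => ?_)
    obtain ⟨hmem, hlt⟩ := mem_filter.mp ha
    rw [ih a.1 hlt, hpsum a.2 (by rw [HasAntidiagonal.mem_antidiagonal] at hmem; omega)]

end MvPolynomial

open Polynomial in
theorem Finset.prod_X_sub_C_eq_of_sum_pow_eq {σ K : Type*} [Fintype σ] [Field K] [CharZero K]
    {d e : σ → K} (h : ∀ j, 0 < j → ∑ i, d i ^ j = ∑ i, e i ^ j) :
    ∏ i, (X - C (d i)) = ∏ i, (X - C (e i)) := by
  have hprod := fun f : σ → K => (Multiset.prod_X_sub_X_eq_sum_esymm (univ.val.map f)).symm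
  simp only [Multiset.map_map, Function.comp_def, Multiset.card_map, card_val] at hprod
  rw [prod_eq_multiset_prod, prod_eq_multiset_prod, ← hprod d, ← hprod e]
  simp only [← MvPolynomial.aeval_esymm_eq_multiset_esymm σ K,
    MvPolynomial.aeval_esymm_eq_of_sum_pow_eq h]

namespace Matrix.IsHermitian

variable {𝕜 m m' : Type*} [RCLike 𝕜] [Fintype m] [DecidableEq m] [Fintype m'] [DecidableEq m']

theorem trace_pow_eq_sum_eigenvalues_pow {A : Matrix m m 𝕜} (hA : A.IsHermitian) (L : ℕ) :
    (A ^ L).trace = ∑ i, (hA.eigenvalues i : 𝕜) ^ L := by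
  conv_lhs => rw [hA.spectral_theorem, ← map_pow, Unitary.conjStarAlgAut_apply, trace_mul_cycle]
  simp [diagonal_pow]

theorem charpoly_eq_of_trace_pow_eq {A : Matrix m m 𝕜} {B : Matrix m' m' 𝕜}
    (hA : A.IsHermitian) (hB : B.IsHermitian) (hcard : Fintype.card m = Fintype.card m')
    (h : ∀ L, 0 < L → (A ^ L).trace = (B ^ L).trace) :
    A.charpoly = B.charpoly := by
  let e := Fintype.equivOfCardEq hcard
  rw [hA.charpoly_eq, hB.charpoly_eq, ← e.prod_comp]
  refine Finset.prod_X_sub_C_eq_of_sum_pow_eq fun L hL => ?_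
  rw [e.sum_comp (fun i => (hB.eigenvalues i : 𝕜) ^ L), ← trace_pow_eq_sum_eigenvalues_pow,
    ← trace_pow_eq_sum_eigenvalues_pow, h L hL]

end Matrix.IsHermitian

theorem SimpleGraph.trace_adjMatrix_pow_eq_natCast {W α : Type*} [Fintype W] [DecidableEq W]
    [Semiring α] (G : SimpleGraph W) [DecidableRel G.Adj] (n : ℕ) :
    (G.adjMatrix α ^ n).trace = ((G.adjMatrix ℕ ^ n).trace : α) := by
  simp [Matrix.trace, adjMatrix_pow_apply_eq_card_walk]

section Exchange

variable {α : Type*} [DecidableEq α] {S T : Finset α} {a b c d : α}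

theorem Finset.card_insert_erase_of_mem_of_notMem (ha : a ∈ S) (hb : b ∉ S) :
    #(insert b (S.erase a)) = #S := by
  grind

theorem Finset.sdiff_insert_erase (ha : a ∈ S) (hb : b ∉ S) :
    S \ insert b (S.erase a) = {a} := by
  ext y
  simp only [mem_sdiff, mem_insert, mem_erase, mem_singleton]
  grind

theorem Finset.insert_erase_sdiff (hb : b ∉ S) : insert b (S.erase a) \ S = {b} := by
  ext y
  simp only [mem_sdiff, mem_insert, mem_erase, mem_singleton]
  grind

theorem Finset.symmDiff_insert_erase (ha : a ∈ S) (hb : b ∉ S) :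
    symmDiff S (insert b (S.erase a)) = {a, b} := by
  rw [symmDiff_def, sdiff_insert_erase ha hb, insert_erase_sdiff hb]
  rfl

theorem Finset.eq_insert_erase_of_sdiff_eq_singleton (hc : S \ T = {c}) (hd : T \ S = {d}) :
    T = insert d (S.erase c) := by
  ext y
  have hyc := congrArg (y ∈ ·) hc
  have hyd := congrArg (y ∈ ·) hd
  simp only [mem_sdiff, mem_singleton, eq_iff_iff] at hyc hyd
  simp only [mem_insert, mem_erase]
  tauto

theorem Finset.exists_sdiff_eq_singleton_of_symmDiff_eq_pair (hcard : #S = #T)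
    (hsd : symmDiff S T = {a, b}) (hab : a ≠ b) :
    ∃ c d, S \ T = {c} ∧ T \ S = {d} ∧ (c = a ∧ d = b ∨ c = b ∧ d = a) := by
  have hsum : #(S \ T) + #(T \ S) = 2 := by
    rw [← card_union_of_disjoint disjoint_sdiff_sdiff, ← card_pair hab, ← hsd]
    rfl
  have hone : #(S \ T) = 1 ∧ #(T \ S) = 1 := by
    have := card_sdiff_eq_card_sdiff_iff.mpr hcard
    omega
  obtain ⟨c, hc⟩ := card_eq_one.mp hone.1
  obtain ⟨d, hd⟩ := card_eq_one.mp hone.2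
  refine ⟨c, d, hc, hd, Set.pair_eq_pair_iff.mp ?_⟩
  have hpair : ({c, d} : Finset α) = {a, b} := by rw [← hsd, symmDiff_def, hc, hd]; rfl
  simpa using congrArg ((↑) : Finset α → Set α) hpair

end Exchange

section Tuples

theorem Fin.update_append_castAdd {α : Type*} {m n : ℕ} (u : Fin m → α) (v : Fin n → α)
    (t : Fin m) (a : α) :
    Function.update (Fin.append u v) (Fin.castAdd n t) a =
      Fin.append (Function.update u t a) v := by
  refine funext fun i => Fin.addCases (fun i => ?_) (fun i => ?_) i
  · simp [Function.update_apply, Fin.castAdd_inj]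
  · have : Fin.natAdd m i ≠ Fin.castAdd n t := by simp [Fin.ext_iff]; omega
    simp [this]

theorem Function.Injective.update_of_notMem_range {α β : Type*} [DecidableEq α] {u : α → β}
    (hu : Function.Injective u) (t : α) {m : β} (hm : m ∉ Set.range u) :
    Function.Injective (Function.update u t m) := by
  intro i j hij
  by_cases hi : i = t <;> by_cases hj : j = t <;>
    simp_all [Function.update_of_ne, eq_comm (a := m), hu.eq_iff]

theorem Finset.image_univ_update {α β : Type*} [Fintype α] [DecidableEq α] [DecidableEq β]
    {u : α → β} (hu : Function.Injective u) (t : α) (m : β) :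
    univ.image (Function.update u t m) = insert m ((univ.image u).erase (u t)) := by
  have hoff : (univ.erase t).image (Function.update u t m) = (univ.erase t).image u :=
    image_congr fun i hi => Function.update_of_ne (ne_of_mem_erase hi) _ _
  conv_lhs => rw [← insert_erase (mem_univ t), image_insert, Function.update_self, hoff,
    image_erase hu]

variable {V : Type*} [DecidableEq V] {k : ℕ}

theorem card_image_univ_of_injective {u : Fin k → V} (hu : Function.Injective u) :
    #(univ.image u) = k := by
  rw [card_image_of_injective _ hu, card_univ, Fintype.card_fin]

variable [Fintype V]

theorem card_injective_image_eq {S : Finset V} (hS : #S = k) :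
    #{u : Fin k → V | Function.Injective u ∧ univ.image u = S} = k ! := by
  have hemb : k ! = #(univ : Finset (Fin k ↪ S)) := by
    rw [card_univ, Fintype.card_embedding_eq, Fintype.card_coe, Fintype.card_fin, hS,
      Nat.descFactorial_self]
  rw [hemb]
  symm
  refine card_bij (fun e _ => fun i => (e i : V)) (fun e _ => ?_) (fun e _ e' _ h => ?_) ?_
  · have hinj : Function.Injective fun i => (e i : V) := Subtype.val_injective.comp e.injective
    refine mem_filter.mpr ⟨mem_univ _, hinj, eq_of_subset_of_card_le ?_ ?_⟩
    · exact image_subset_iff.mpr fun i _ => (e i).2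
    · rw [card_image_univ_of_injective hinj, hS]
  · exact Function.Embedding.ext fun i => Subtype.ext (congrFun h i)
  · intro u hu
    obtain ⟨hinj, himg⟩ := (mem_filter.mp hu).2
    refine ⟨⟨fun i => ⟨u i, himg ▸ mem_image_of_mem u (mem_univ i)⟩, fun i j h => hinj ?_⟩,
      mem_univ _, rfl⟩
    exact congrArg Subtype.val h

theorem sum_injective_image {M : Type*} [AddCommMonoid M] (f : Finset V → M) :
    ∑ u : Fin k → V with Function.Injective u, f (univ.image u) =
      k ! • ∑ S ∈ powersetCard k univ, f S := by
  rw [← sum_fiberwise_of_maps_to' (t := powersetCard k univ) (g := fun u => univ.image u)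
    (fun u hu => mem_powersetCard_univ.mpr (card_image_univ_of_injective (mem_filter.mp hu).2)),
    smul_sum]
  refine sum_congr rfl fun S hS => ?_
  rw [sum_const, filter_filter, card_injective_image_eq (mem_powersetCard_univ.mp hS)]

end Tuples

section SymPow

variable {V : Type*} [DecidableEq V] {G : SimpleGraph V} {k : ℕ}

theorem symPow_adj_iff {S T : {s : Finset V // #s = k}} :
    (symPow G k).Adj S T ↔ ∃ a ∈ S.1, ∃ b ∉ S.1, G.Adj a b ∧ T.1 = insert b (S.1.erase a) := by
  constructor
  · rintro ⟨a, b, hab, hsd⟩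
    obtain ⟨c, d, hc, hd, hcd⟩ :=
      exists_sdiff_eq_singleton_of_symmDiff_eq_pair (S.2.trans T.2.symm) hsd hab.ne
    have hcS : c ∈ S.1 := (mem_sdiff.mp (hc ▸ mem_singleton_self c)).1
    have hdS : d ∉ S.1 := (mem_sdiff.mp (hd ▸ mem_singleton_self d)).2
    refine ⟨c, hcS, d, hdS, ?_, eq_insert_erase_of_sdiff_eq_singleton hc hd⟩
    rcases hcd with ⟨rfl, rfl⟩ | ⟨rfl, rfl⟩
    exacts [hab, hab.symm]
  · rintro ⟨a, ha, b, hb, hab, hT⟩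
    exact ⟨a, b, hab, hT ▸ symmDiff_insert_erase ha hb⟩

variable [Fintype V]

theorem sum_symPow_neighborFinset {M : Type*} [AddCommMonoid M] (S : {s : Finset V // #s = k})
    (f : Finset V → M) :
    ∑ T ∈ (symPow G k).neighborFinset S, f T.1 =
      ∑ a ∈ S.1, ∑ b with b ∉ S.1 ∧ G.Adj a b, f (insert b (S.1.erase a)) := by
  simp only [sum_filter]
  rw [← sum_product', ← sum_filter]
  symm
  refine sum_bij (fun p hp => ⟨insert p.2 (S.1.erase p.1), ?_⟩) ?_ ?_ ?_ (fun _ _ => rfl)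
  · obtain ⟨hp, hpS, -⟩ := mem_filter.mp hp
    rw [card_insert_erase_of_mem_of_notMem (mem_product.mp hp).1 hpS, S.2]
  · intro p hp
    obtain ⟨hp, hpS, hadj⟩ := mem_filter.mp hp
    exact (SimpleGraph.mem_neighborFinset _ _ _).mpr
      (symPow_adj_iff.mpr ⟨p.1, (mem_product.mp hp).1, p.2, hpS, hadj, rfl⟩)
  · intro p hp q hq hpq
    obtain ⟨hp, hpS, -⟩ := mem_filter.mp hp
    obtain ⟨hq, hqS, -⟩ := mem_filter.mp hq
    have hX := congrArg Subtype.val hpq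
    have h1 := congrArg (S.1 \ ·) hX
    have h2 := congrArg (· \ S.1) hX
    simp only [sdiff_insert_erase (mem_product.mp hp).1 hpS,
      sdiff_insert_erase (mem_product.mp hq).1 hqS, insert_erase_sdiff hpS, insert_erase_sdiff hqS,
      singleton_inj] at h1 h2
    exact Prod.ext h1 h2
  · intro T hT
    obtain ⟨a, ha, b, hb, hab, hT⟩ :=
      symPow_adj_iff.mp ((SimpleGraph.mem_neighborFinset _ _ _).mp hT)
    exact ⟨(a, b), mem_filter.mpr ⟨mem_product.mpr ⟨ha, mem_univ b⟩, hb, hab⟩, Subtype.ext hT.symm⟩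

variable (G k) in
noncomputable def symPowWalks (r : ℕ) (S T : Finset V) : ℕ :=
  if h : #S = k ∧ #T = k then ((symPow G k).adjMatrix ℕ ^ r) ⟨S, h.1⟩ ⟨T, h.2⟩ else 0

theorem symPowWalks_zero {S T : Finset V} (hS : #S = k) (hT : #T = k) :
    symPowWalks G k 0 S T = if S = T then 1 else 0 := by
  simp [symPowWalks, hS, hT, Matrix.one_apply]

theorem symPowWalks_succ (r : ℕ) {S : Finset V} (hS : #S = k) (T : Finset V) :
    symPowWalks G k (r + 1) S T =
      ∑ a ∈ S, ∑ b with b ∉ S ∧ G.Adj a b, symPowWalks G k r (insert b (S.erase a)) T := by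
  by_cases hT : #T = k
  · rw [symPowWalks, dif_pos ⟨hS, hT⟩, pow_succ', SimpleGraph.adjMatrix_mul_apply]
    convert sum_symPow_neighborFinset ⟨S, hS⟩ (symPowWalks G k r · T) using 2 with U
    rw [symPowWalks, dif_pos ⟨U.2, hT⟩]
  · simp [symPowWalks, hT]

theorem trace_adjMatrix_symPow_pow (r : ℕ) :
    ((symPow G k).adjMatrix ℕ ^ r).trace = ∑ S ∈ powersetCard k univ, symPowWalks G k r S S := by
  rw [sum_subtype _ fun S => mem_powersetCard_univ, Matrix.trace]
  refine sum_congr rfl fun S _ => ?_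
  rw [symPowWalks, dif_pos ⟨S.2, S.2⟩]
  rfl

end SymPow

namespace Tp

def init {n : ℕ} (θ : Tp (n + 1)) : Tp n :=
  (fun a b => θ.1 a.castSucc b.castSucc, fun a b => θ.2 a.castSucc b.castSucc)

variable {k : ℕ}

def RightSubsetLeft (θ : Tp (k + k)) : Prop :=
  ∀ j, ∃ i, θ.1 (Fin.castAdd k i) (Fin.natAdd k j)

def HalvesInjective (θ : Tp (k + k)) : Prop :=
  (∀ i j, θ.1 (Fin.castAdd k i) (Fin.castAdd k j) → i = j) ∧
    ∀ i j, θ.1 (Fin.natAdd k i) (Fin.natAdd k j) → i = j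

def IsExchange (τ : Tp (k + k + 1)) (t : Fin k) : Prop :=
  (∀ i, ¬τ.1 (Fin.castAdd k i).castSucc (Fin.last _)) ∧ τ.2 (Fin.castAdd k t).castSucc (Fin.last _)

end Tp

section TupleTypes

variable {V : Type*} (G : SimpleGraph V) {k : ℕ} (u v : Fin k → V)

theorem init_tp_snoc {n : ℕ} (x : Fin n → V) (m : V) : (tp G (Fin.snoc x m)).init = tp G x := by
  simp only [Tp.init, tp, Fin.snoc_castSucc]
  rfl

theorem halvesInjective_tp_append :
    (tp G (Fin.append u v)).HalvesInjective ↔ Function.Injective u ∧ Function.Injective v := by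
  simp only [Tp.HalvesInjective, tp, Fin.append_left, Fin.append_right, Function.Injective]

variable [DecidableEq V]

theorem rightSubsetLeft_tp_append :
    (tp G (Fin.append u v)).RightSubsetLeft ↔ univ.image v ⊆ univ.image u := by
  simp only [Tp.RightSubsetLeft, tp, Fin.append_left, Fin.append_right, subset_iff, mem_image,
    mem_univ, true_and, forall_exists_index, forall_apply_eq_imp_iff]

theorem isExchange_tp_snoc_append (m : V) (t : Fin k) :
    (tp G (Fin.snoc (Fin.append u v) m)).IsExchange t ↔ m ∉ univ.image u ∧ G.Adj (u t) m := by
  simp only [Tp.IsExchange, tp, Fin.snoc_castSucc, Fin.snoc_last, Fin.append_left, mem_image,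
    mem_univ, true_and, not_exists]

end TupleTypes

noncomputable def walkCount (k : ℕ) : (r : ℕ) → WLColor (k + k) r → ℕ
  | 0, θ => if Tp.RightSubsetLeft (k := k) θ then 1 else 0
  | r + 1, c => ((c : Multiset (Tp (k + k + 1) × (Fin (k + k) → WLColor (k + k) r))).map fun p =>
      ∑ t : Fin k, if p.1.IsExchange t then walkCount k r (p.2 (Fin.castAdd k t)) else 0).sum

noncomputable def closedWalkCount (k r : ℕ) (c : WLColor (k + k) (r + 1)) : ℕ :=
  walkCount k (r + 1) <| Multiset.filter
    (fun p : Tp (k + k + 1) × (Fin (k + k) → WLColor (k + k) r) =>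
      p.1.init.HalvesInjective ∧ p.1.init.RightSubsetLeft) c

section WalkCount

variable {V : Type*} [Fintype V] (G : SimpleGraph V) {k : ℕ}

theorem walkCount_WL_succ (r : ℕ) (x : Fin (k + k) → V) :
    walkCount k (r + 1) (WL G (k + k) (r + 1) x) =
      ∑ m, ∑ t : Fin k, if (tp G (Fin.snoc x m)).IsExchange t then
        walkCount k r (WL G (k + k) r (Function.update x (Fin.castAdd k t) m)) else 0 := by
  simp only [walkCount, WL, Multiset.map_map, Function.comp_def]
  rfl

variable [DecidableEq V]

theorem walkCount_WL_append (r : ℕ) {u v : Fin k → V} (hu : Function.Injective u)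
    (hv : Function.Injective v) :
    walkCount k r (WL G (k + k) r (Fin.append u v)) =
      symPowWalks G k r (univ.image u) (univ.image v) := by
  induction r generalizing u with
  | zero =>
    have hle : #(univ.image u) ≤ #(univ.image v) := by
      rw [card_image_univ_of_injective hu, card_image_univ_of_injective hv]
    rw [symPowWalks_zero (card_image_univ_of_injective hu) (card_image_univ_of_injective hv)]
    simp only [walkCount, WL, rightSubsetLeft_tp_append, subset_iff_eq_of_card_le hle,
      eq_comm (a := univ.image u)]
  | succ r ih =>
    rw [walkCount_WL_succ, symPowWalks_succ r (card_image_univ_of_injective hu),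
      sum_image hu.injOn, sum_comm]
    refine sum_congr rfl fun t _ => ?_
    rw [sum_filter]
    refine sum_congr rfl fun m _ => ?_
    simp only [isExchange_tp_snoc_append, Fin.update_append_castAdd]
    by_cases hm : m ∉ univ.image u ∧ G.Adj (u t) m
    · have hm' : m ∉ Set.range u := by simpa using hm.1
      rw [if_pos hm, if_pos hm, ih (hu.update_of_notMem_range t hm'), image_univ_update hu]
    · rw [if_neg hm, if_neg hm]

theorem closedWalkCount_WL_append (r : ℕ) (u v : Fin k → V) :
    closedWalkCount k r (WL G (k + k) (r + 1) (Fin.append u v)) =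
      if Function.Injective u ∧ Function.Injective v ∧ univ.image v = univ.image u then
        symPowWalks G k (r + 1) (univ.image u) (univ.image u) else 0 := by
  rw [closedWalkCount, WL]
  by_cases hstart :
      (tp G (Fin.append u v)).HalvesInjective ∧ (tp G (Fin.append u v)).RightSubsetLeft
  · rw [Multiset.filter_eq_self.mpr fun p hp => by
      obtain ⟨m, -, rfl⟩ := Multiset.mem_map.mp hp
      rwa [init_tp_snoc]]
    rw [halvesInjective_tp_append, rightSubsetLeft_tp_append] at hstart
    obtain ⟨⟨hu, hv⟩, hvu⟩ := hstart
    have hcard : #(univ.image u) ≤ #(univ.image v) := by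
      rw [card_image_of_injective _ hu, card_image_of_injective _ hv]
    have hvu : univ.image v = univ.image u := (subset_iff_eq_of_card_le hcard).mp hvu
    rw [if_pos ⟨hu, hv, hvu⟩]
    exact (walkCount_WL_append G (r + 1) hu hv).trans (by rw [hvu])
  · rw [Multiset.filter_eq_nil.mpr fun p hp => by
      obtain ⟨m, -, rfl⟩ := Multiset.mem_map.mp hp
      rwa [init_tp_snoc]]
    rw [halvesInjective_tp_append, rightSubsetLeft_tp_append] at hstart
    rw [if_neg fun h => hstart ⟨⟨h.1, h.2.1⟩, h.2.2.subset⟩]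
    rfl

theorem sum_closedWalkCount_WL (r : ℕ) :
    ∑ x : Fin (k + k) → V, closedWalkCount k r (WL G (k + k) (r + 1) x) =
      k ! * k ! * ((symPow G k).adjMatrix ℕ ^ (r + 1)).trace := by
  simp only [← (Fin.appendEquiv k k).sum_comp, Fintype.sum_prod_type, Fin.appendEquiv,
    Equiv.coe_fn_mk, closedWalkCount_WL_append]
  have hinner (u : Fin k → V) :
      ∑ v : Fin k → V, (if Function.Injective u ∧ Function.Injective v ∧
          univ.image v = univ.image u then symPowWalks G k (r + 1) (univ.image u) (univ.image u)
          else 0) =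
        if Function.Injective u then k ! * symPowWalks G k (r + 1) (univ.image u) (univ.image u)
        else 0 := by
    by_cases hu : Function.Injective u
    · simp only [hu, true_and, if_true]
      rw [← sum_filter, sum_const, smul_eq_mul,
        card_injective_image_eq (card_image_univ_of_injective hu)]
    · simp [hu]
  rw [sum_congr rfl fun u _ => hinner u, ← sum_filter, sum_injective_image
    (fun S => k ! * symPowWalks G k (r + 1) S S), smul_eq_mul, ← mul_sum,
    trace_adjMatrix_symPow_pow, mul_assoc]

end WalkCount

theorem trace_adjMatrix_symPow_pow_eq_of_WL_eq {V V' : Type*} [Fintype V] [Fintype V']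
    [DecidableEq V] [DecidableEq V'] {G : SimpleGraph V} {H : SimpleGraph V'} {k r : ℕ}
    (h : (univ.val.map fun x : Fin (k + k) → V => WL G (k + k) (r + 1) x) =
      univ.val.map fun x : Fin (k + k) → V' => WL H (k + k) (r + 1) x) :
    ((symPow G k).adjMatrix ℕ ^ (r + 1)).trace = ((symPow H k).adjMatrix ℕ ^ (r + 1)).trace := by
  have hsum := congrArg (fun s => (s.map (closedWalkCount k r)).sum) h
  simp only [Multiset.map_map, Function.comp_def, ← sum_eq_multiset_sum,
    sum_closedWalkCount_WL] at hsum
  exact Nat.eq_of_mul_eq_mul_left (by positivity) hsum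

/-- If the 2k-dimensional Weisfeiler-Lehman algorithm does not
distinguish `G` from `H`, then the k-th symmetric powers `G^{k}` and `H^{k}` are
cospectral. -/
theorem symPow_cospectral_of_WL2k_multisets_eq
    {V V' : Type*} [Fintype V] [Fintype V'] [DecidableEq V] [DecidableEq V']
    (G : SimpleGraph V) (H : SimpleGraph V') (k : ℕ)
    (hcard : Fintype.card V = Fintype.card V')
    (h : ∀ r : ℕ,
      (Finset.univ.val.map fun x : Fin (k + k) → V => WL G (k + k) r x) =
      (Finset.univ.val.map fun x : Fin (k + k) → V' => WL H (k + k) r x)) :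
    ((symPow G k).adjMatrix ℝ).charpoly = ((symPow H k).adjMatrix ℝ).charpoly := by
  refine Matrix.IsHermitian.charpoly_eq_of_trace_pow_eq
    (Matrix.isHermitian_iff_isSymm.mpr (SimpleGraph.isSymm_adjMatrix _))
    (Matrix.isHermitian_iff_isSymm.mpr (SimpleGraph.isSymm_adjMatrix _))
    (by simp only [Fintype.card_finset_len, hcard]) fun L hL => ?_
  obtain ⟨r, rfl⟩ := Nat.exists_eq_add_one_of_ne_zero hL.ne'
  rw [SimpleGraph.trace_adjMatrix_pow_eq_natCast (α := ℝ),
    SimpleGraph.trace_adjMatrix_pow_eq_natCast (α := ℝ),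
    trace_adjMatrix_symPow_pow_eq_of_WL_eq (h (r + 1))]
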